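/- arXiv:2107.14198 — 2 statements merged into one kernel-verified Lean document; each statement's English description precedes it below -/
import Mathlib

section
/- Let L be a residuated lattice, ι ∈ L a cyclic element, and define τ_Tw(a,b) = (a, a\ι) on Tw(L,ι). Then for all (a,b),(c,d) ∈ Tw(L,ι): (1) τ_Tw((a,b)·(c,d)) = τ_Tw(a,b)·τ_Tw(c,d); (2) τ_Tw((a,b)∨(c,d)) = τ_Tw(a,b)∨τ_Tw(c,d); (3) (τ_Tw(a,b)·(c,d)) ∨ ((a,b)·τ_Tw(c,d)) = (a,b)·(c,d). In particular, τ_Tw is a Nelson conucleus on the involutive residuated lattice Tw(L,ι). -/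
/-- A residuated lattice: a lattice with a monoid operation and residuals
`ldiv x z` (i.e. `x \ z`) and `rdiv z y` (i.e. `z / y`) satisfying the
residuation law `x * y ≤ z ↔ y ≤ x \ z ↔ x ≤ z / y`. -/
class ResiduatedLattice (α : Type*) extends Lattice α, Monoid α where
  ldiv : α → α → α
  rdiv : α → α → α
  ldiv_adj : ∀ {x y z : α}, x * y ≤ z ↔ y ≤ ldiv x z
  rdiv_adj : ∀ {x y z : α}, x * y ≤ z ↔ x ≤ rdiv z y

open ResiduatedLattice

variable {α : Type*} [ResiduatedLattice α]

/-- Involution on the full twist structure: `∼(a,b) = (b,a)`. -/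
def tneg (p : α × α) : α × α := (p.2, p.1)

/-- Join of the twist structure `L × L^∂`. -/
def tjoin (p q : α × α) : α × α := (p.1 ⊔ q.1, p.2 ⊓ q.2)

/-- Meet of the twist structure `L × L^∂`. -/
def tmeet (p q : α × α) : α × α := (p.1 ⊓ q.1, p.2 ⊔ q.2)

/-- Order of the twist structure `L × L^∂`. -/
def tle (p q : α × α) : Prop := p.1 ≤ q.1 ∧ q.2 ≤ p.2

/-- Multiplication of the twist structure:
`(a,b)·(a′,b′) = (a·a′, b′/a ∧ a′\b)`. -/
def tmul (p q : α × α) : α × α := (p.1 * q.1, rdiv q.2 p.1 ⊓ ldiv q.1 p.2)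

/-- Left division of the twist structure:
`(a,b)\(a′,b′) = (a\a′ ∧ b/b′, b′·a)`. -/
def tld (p q : α × α) : α × α := (ldiv p.1 q.1 ⊓ rdiv p.2 q.2, q.2 * p.1)

/-- Right division of the twist structure:
`(a′,b′)/(a,b) = (a′/a ∧ b′\b, a·b′)`. -/
def trd (q p : α × α) : α × α := (rdiv q.1 p.1 ⊓ ldiv q.2 p.2, p.1 * q.2)

/-- The natural conucleus on the twist structure (for cyclic `ι`):
`τ_Tw(a,b) = (a, a\ι)`. -/
def ttw (ι : α) (p : α × α) : α × α := (p.1, ldiv p.1 ι)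

lemma rl_mul_ldiv_le (x z : α) : x * ldiv x z ≤ z := ldiv_adj.2 le_rfl

lemma rl_rdiv_mul_le (z y : α) : rdiv z y * y ≤ z := rdiv_adj.2 le_rfl

lemma rl_mul_le_left {a b : α} (h : a ≤ b) (c : α) : c * a ≤ c * b :=
  ldiv_adj.2 (h.trans (ldiv_adj.1 le_rfl))

lemma rl_mul_le_right {a b : α} (h : a ≤ b) (c : α) : a * c ≤ b * c :=
  rdiv_adj.2 (h.trans (rdiv_adj.1 le_rfl))

lemma rl_ldiv_anti {a b : α} (h : a ≤ b) (z : α) : ldiv b z ≤ ldiv a z :=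
  ldiv_adj.1 ((rl_mul_le_right h _).trans (rl_mul_ldiv_le b z))

lemma rl_ldiv_mul (a c z : α) : ldiv (a * c) z = ldiv c (ldiv a z) := by
  apply le_antisymm
  · exact ldiv_adj.1 (ldiv_adj.1 (by rw [← mul_assoc]; exact rl_mul_ldiv_le _ _))
  · refine ldiv_adj.1 ?_
    rw [mul_assoc]
    exact (rl_mul_le_left (rl_mul_ldiv_le c (ldiv a z)) a).trans (rl_mul_ldiv_le a z)

lemma rl_rdiv_rdiv (a c z : α) : rdiv (rdiv z c) a = rdiv z (a * c) := by
  apply le_antisymm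
  · refine rdiv_adj.1 ?_
    rw [← mul_assoc]
    exact (rl_mul_le_right (rl_rdiv_mul_le (rdiv z c) a) c).trans (rl_rdiv_mul_le z c)
  · exact rdiv_adj.1 (rdiv_adj.1 (by rw [mul_assoc]; exact rl_rdiv_mul_le _ _))

lemma rl_one_ldiv (x : α) : ldiv 1 x = x :=
  le_antisymm (by have := rl_mul_ldiv_le 1 x; rwa [one_mul] at this)
    (ldiv_adj.1 (by rw [one_mul]))

lemma rl_rdiv_one (x : α) : rdiv x 1 = x :=
  le_antisymm (by have := rl_rdiv_mul_le x 1; rwa [mul_one] at this)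
    (rdiv_adj.1 (by rw [mul_one]))

lemma rl_ldiv_sup (a c z : α) : ldiv (a ⊔ c) z = ldiv a z ⊓ ldiv c z := by
  apply le_antisymm
  · exact le_inf (rl_ldiv_anti le_sup_left z) (rl_ldiv_anti le_sup_right z)
  · refine ldiv_adj.1 (rdiv_adj.2 (sup_le ?_ ?_))
    · exact rdiv_adj.1 ((rl_mul_le_left inf_le_left a).trans (rl_mul_ldiv_le a z))
    · exact rdiv_adj.1 ((rl_mul_le_left inf_le_right c).trans (rl_mul_ldiv_le c z))

/-- for a residuated lattice `L`, a cyclic element `ι ∈ L`,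
and the map `τ_Tw(a,b) = (a, a\ι)` on `Tw(L,ι) = {(a,b) : a·b ≤ ι}`:
(1) `τ_Tw` preserves `·`; (2) `τ_Tw` preserves `∨`;
(3) `(τ_Tw(a,b)·(c,d)) ∨ ((a,b)·τ_Tw(c,d)) = (a,b)·(c,d)`.
In particular, `τ_Tw` is a Nelson conucleus on the involutive residuated
lattice `Tw(L,ι)`. -/
theorem ttw_is_nelson_conucleus (ι : α) (hcyc : ∀ x : α, ldiv x ι = rdiv ι x) :
    letI S : Set (α × α) := {p | p.1 * p.2 ≤ ι}
    -- (1), (2), (3)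
    (∀ p ∈ S, ∀ q ∈ S, ttw ι (tmul p q) = tmul (ttw ι p) (ttw ι q)) ∧
    (∀ p ∈ S, ∀ q ∈ S, ttw ι (tjoin p q) = tjoin (ttw ι p) (ttw ι q)) ∧
    (∀ p ∈ S, ∀ q ∈ S, tjoin (tmul (ttw ι p) q) (tmul p (ttw ι q)) = tmul p q) ∧
    -- `τ_Tw` maps `Tw(L,ι)` to itself and is a Nelson conucleus on it:
    (∀ p ∈ S, ttw ι p ∈ S) ∧
    (∀ p ∈ S, tle (ttw ι p) p) ∧
    (∀ p ∈ S, ttw ι (ttw ι p) = ttw ι p) ∧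
    (∀ p ∈ S, ∀ q ∈ S, tle p q → tle (ttw ι p) (ttw ι q)) ∧
    (∀ p ∈ S, ∀ q ∈ S, tle (tmul (ttw ι p) (ttw ι q)) (ttw ι (tmul p q))) ∧
    (∀ p ∈ S, tmul (ttw ι ((1 : α), ι)) (ttw ι p) = ttw ι p ∧
      tmul (ttw ι p) (ttw ι ((1 : α), ι)) = ttw ι p) ∧
    (∀ p ∈ S, ∀ q ∈ S, tle (tmul p q) (tjoin (tmul (ttw ι p) q) (tmul p (ttw ι q)))) := by
  set S : Set (α × α) := {p : α × α | p.1 * p.2 ≤ ι}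
  have key : ∀ a c : α, rdiv (ldiv c ι) a = ldiv (a * c) ι := fun a c => by
    rw [hcyc c, rl_rdiv_rdiv, ← hcyc]
  have hmul : ∀ p ∈ S, ∀ q ∈ S, ttw ι (tmul p q) = tmul (ttw ι p) (ttw ι q) := by
    intro p _ q _
    simp only [ttw, tmul, key, ← rl_ldiv_mul, inf_idem]
  have h3 : ∀ p ∈ S, ∀ q ∈ S,
      tjoin (tmul (ttw ι p) q) (tmul p (ttw ι q)) = tmul p q := by
    intro p hp q hq
    have hp' : p.1 * p.2 ≤ ι := hp
    have hY : ldiv q.1 p.2 ≤ ldiv (p.1 * q.1) ι := by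
      refine ldiv_adj.1 ?_
      rw [mul_assoc]
      exact (rl_mul_le_left (rl_mul_ldiv_le q.1 p.2) p.1).trans hp'
    simp only [ttw, tmul, tjoin, key, ← rl_ldiv_mul]
    refine congrArg₂ Prod.mk (sup_idem _) ?_
    exact le_antisymm
      (le_inf (inf_le_left.trans inf_le_left) (inf_le_right.trans inf_le_right))
      (le_inf (le_inf inf_le_left (inf_le_right.trans hY))
        (le_inf (inf_le_right.trans hY) inf_le_right))
  refine ⟨hmul, ?_, h3, ?_, ?_, ?_, ?_, ?_, ?_, ?_⟩
  · intro p _ q _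
    simp only [ttw, tjoin, rl_ldiv_sup]
  · intro p _
    exact rl_mul_ldiv_le p.1 ι
  · intro p hp
    exact ⟨le_rfl, ldiv_adj.1 hp⟩
  · intro p _
    rfl
  · intro p _ q _ h
    exact ⟨h.1, rl_ldiv_anti h.1 ι⟩
  · intro p hp q hq
    rw [hmul p hp q hq]
    exact ⟨le_rfl, le_rfl⟩
  · intro p _
    constructor
    · simp [ttw, tmul, rl_one_ldiv, rl_rdiv_one]
    · simp [ttw, tmul, rl_one_ldiv, ← hcyc]
  · intro p hp q hq
    rw [h3 p hp q hq]
    exact ⟨le_rfl, le_rfl⟩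
end

section
/- Let A be a residuated lattice and τ a Nelson conucleus on A. Define x ⇒ y = τ(x)\y, y ⇐ x = y/τ(x), the relation x ⪯ y iff τ(x) ≤ τ(y), and x θ y iff τ(x) = τ(y). Then: (1) ⪯ is a preorder compatible with the operations ∧, ∨, ·, ⇒, ⇐ (where ⇒ is antitone in its first argument and monotone in its second, and dually for ⇐); (2) θ is a congruence of the algebra (A, ∧, ∨, ·, ⇒, ⇐, e), it is the kernel of the map n(x) = τ(x), and the quotient (A, ∧, ∨, ·, ⇒, ⇐, e)/θ is isomorphic to the conucleus image A_τ. -/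
open ResiduatedLattice

variable {α : Type*} [ResiduatedLattice α]

/-- A (cyclic) involutive residuated lattice: a residuated lattice with an
involution `∼` satisfying `∼∼x = x` and the contraposition law
`x\∼y = ∼x/y`. -/
class InvResiduatedLattice (β : Type*) extends ResiduatedLattice β where
  neg : β → β
  neg_neg : ∀ x : β, neg (neg x) = x
  contra : ∀ x y : β, ldiv x (neg y) = rdiv (neg x) y

open InvResiduatedLattice

/-- A conucleus on a residuated lattice (conditions (C1)-(C5)). -/
def IsConucleus {β : Type*} [Lattice β] [Monoid β] (τ : β → β) : Prop :=
  (∀ x, τ x ≤ x) ∧ (∀ x, τ (τ x) = τ x) ∧ (∀ x y, x ≤ y → τ x ≤ τ y) ∧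
  (∀ x y, τ x * τ y ≤ τ (x * y)) ∧
  (∀ x, τ 1 * τ x = τ x) ∧ (∀ x, τ x * τ 1 = τ x)

/-- A Nelson conucleus: a conucleus additionally satisfying
(T1) `τ(x∨y) = τx ∨ τy`, (T2) `τ(x·y) = τx·τy`, and
(T3) `x·y ≤ τx·y ∨ x·τy`. -/
def IsNelsonConucleus {β : Type*} [Lattice β] [Monoid β] (τ : β → β) : Prop :=
  IsConucleus τ ∧
  (∀ x y, τ (x ⊔ y) = τ x ⊔ τ y) ∧
  (∀ x y, τ (x * y) = τ x * τ y) ∧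
  (∀ x y, x * y ≤ τ x * y ⊔ x * τ y)

lemma rl_mul_le_mul {a b c d : α} (h1 : a ≤ b) (h2 : c ≤ d) : a * c ≤ b * d := by
  have hb : c ≤ ldiv b (b * d) := le_trans h2 (ldiv_adj.mp le_rfl)
  have h3 : b * c ≤ b * d := ldiv_adj.mpr hb
  have ha : a ≤ rdiv (b * c) c := le_trans h1 (rdiv_adj.mp le_rfl)
  exact le_trans (rdiv_adj.mpr ha) h3

lemma rl_mul_ldiv (a b : α) : a * ldiv a b ≤ b := ldiv_adj.mpr le_rfl

lemma rl_rdiv_mul (a b : α) : rdiv b a * a ≤ b := rdiv_adj.mpr le_rfl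

/-- for a residuated lattice `A` with Nelson conucleus `τ`,
with `x ⇒ y = τ(x)\y`, `y ⇐ x = y/τ(x)`, `x ⪯ y ↔ τx ≤ τy` and
`x θ y ↔ τx = τy`: (1) `⪯` is a preorder compatible with the operations
`∧, ∨, ·, ⇒, ⇐`; (2) `θ` is a congruence of `(A,∧,∨,·,⇒,⇐,e)`, it is the
kernel of `n(x) = τ(x)`, and the quotient by `θ` is isomorphic to the
conucleus image `A_τ` via the map induced by `n`. -/
theorem preorder_congruence_quotient_iso {α : Type*} [ResiduatedLattice α]
    (τ : α → α) (hτ : IsNelsonConucleus τ) :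
    letI dld : α → α → α := fun x y => ldiv (τ x) y
    letI drd : α → α → α := fun y x => rdiv y (τ x)
    letI pre : α → α → Prop := fun x y => τ x ≤ τ y
    letI θ : α → α → Prop := fun x y => τ x = τ y
    -- (1) `⪯` is a preorder ...
    (∀ x : α, pre x x) ∧
    (∀ x y z : α, pre x y → pre y z → pre x z) ∧
    -- ... compatible with the operations
    (∀ x y z w : α, pre x y → pre z w →
      pre (x ⊓ z) (y ⊓ w) ∧ pre (x ⊔ z) (y ⊔ w) ∧ pre (x * z) (y * w) ∧
      pre (dld y z) (dld x w) ∧ pre (drd z y) (drd w x)) ∧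
    -- (2) `θ` is a congruence ...
    Equivalence θ ∧
    (∀ x y z w : α, θ x y → θ z w →
      θ (x ⊓ z) (y ⊓ w) ∧ θ (x ⊔ z) (y ⊔ w) ∧ θ (x * z) (y * w) ∧
      θ (dld x z) (dld y w) ∧ θ (drd z x) (drd w y)) ∧
    -- ... which is the kernel of `n(x) = τ(x)` ...
    (∀ x y : α, θ x y ↔ τ x = τ y) ∧
    -- ... and the induced map on the quotient is an isomorphism onto `A_τ`:
    (∃ F : Quot θ → α,
      (∀ x : α, F (Quot.mk θ x) = τ x) ∧
      Function.Injective F ∧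
      Set.range F = Set.range τ ∧
      -- `F` carries the quotient operations (induced by the compatible
      -- operations of `A`) to the operations of `A_τ`:
      (∀ x y : α, F (Quot.mk θ (x ⊓ y)) = τ (F (Quot.mk θ x) ⊓ F (Quot.mk θ y))) ∧
      (∀ x y : α, F (Quot.mk θ (x ⊔ y)) = F (Quot.mk θ x) ⊔ F (Quot.mk θ y)) ∧
      (∀ x y : α, F (Quot.mk θ (x * y)) = F (Quot.mk θ x) * F (Quot.mk θ y)) ∧
      (∀ x y : α, F (Quot.mk θ (dld x y)) = τ (ldiv (F (Quot.mk θ x)) (F (Quot.mk θ y)))) ∧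
      (∀ x y : α, F (Quot.mk θ (drd y x)) = τ (rdiv (F (Quot.mk θ y)) (F (Quot.mk θ x)))) ∧
      F (Quot.mk θ 1) = 1) := by
  obtain ⟨⟨hle, hid, hmono, hsub, h1l, h1r⟩, hT1, hT2, hT3⟩ := hτ
  -- key lemmas
  have hmeet : ∀ x y : α, τ (x ⊓ y) = τ (τ x ⊓ τ y) := by
    intro x y
    apply le_antisymm
    · have h := hmono _ _ (le_inf (hmono _ _ (inf_le_left (a := x) (b := y)))
        (hmono _ _ (inf_le_right (a := x) (b := y))))
      rwa [hid] at h
    · exact hmono _ _ (inf_le_inf (hle x) (hle y))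
  have hpremeet : ∀ x y z w : α, τ x ≤ τ y → τ z ≤ τ w → τ (x ⊓ z) ≤ τ (y ⊓ w) := by
    intro x y z w h1 h2
    rw [hmeet x z, hmeet y w]
    exact hmono _ _ (inf_le_inf h1 h2)
  have hpredld : ∀ x y z w : α, τ x ≤ τ y → τ z ≤ τ w →
      τ (ldiv (τ y) z) ≤ τ (ldiv (τ x) w) := by
    intro x y z w h1 h2
    have key : τ (ldiv (τ y) z) ≤ ldiv (τ x) w := by
      apply ldiv_adj.mp
      calc τ x * τ (ldiv (τ y) z) ≤ τ y * τ (ldiv (τ y) z) := rl_mul_le_mul h1 le_rfl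
        _ = τ (τ y) * τ (ldiv (τ y) z) := by rw [hid]
        _ ≤ τ (τ y * ldiv (τ y) z) := hsub _ _
        _ ≤ τ z := hmono _ _ (rl_mul_ldiv _ _)
        _ ≤ τ w := h2
        _ ≤ w := hle w
    have := hmono _ _ key
    rwa [hid] at this
  have hpredrd : ∀ x y z w : α, τ x ≤ τ y → τ z ≤ τ w →
      τ (rdiv z (τ y)) ≤ τ (rdiv w (τ x)) := by
    intro x y z w h1 h2
    have key : τ (rdiv z (τ y)) ≤ rdiv w (τ x) := by
      apply rdiv_adj.mp
      calc τ (rdiv z (τ y)) * τ x ≤ τ (rdiv z (τ y)) * τ y := rl_mul_le_mul le_rfl h1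
        _ = τ (rdiv z (τ y)) * τ (τ y) := by rw [hid]
        _ ≤ τ (rdiv z (τ y) * τ y) := hsub _ _
        _ ≤ τ z := hmono _ _ (rl_rdiv_mul _ _)
        _ ≤ τ w := h2
        _ ≤ w := hle w
    have := hmono _ _ key
    rwa [hid] at this
  have hone : τ (1 : α) = 1 := by
    apply le_antisymm (hle 1)
    have h := hT3 1 1
    simpa using h
  have hdldeq : ∀ x y : α, τ (ldiv (τ x) y) = τ (ldiv (τ x) (τ y)) := by
    intro x y
    apply le_antisymm
    · exact hpredld x x y (τ y) le_rfl (le_of_eq (hid y).symm)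
    · exact hpredld x x (τ y) y le_rfl (le_of_eq (hid y))
  have hdrdeq : ∀ x y : α, τ (rdiv y (τ x)) = τ (rdiv (τ y) (τ x)) := by
    intro x y
    apply le_antisymm
    · exact hpredrd x x y (τ y) le_rfl (le_of_eq (hid y).symm)
    · exact hpredrd x x (τ y) y le_rfl (le_of_eq (hid y))
  refine ⟨fun x => le_rfl, fun x y z h1 h2 => le_trans h1 h2, ?_, ?_, ?_, ?_, ?_⟩
  · intro x y z w h1 h2
    refine ⟨hpremeet x y z w h1 h2, ?_, ?_, hpredld x y z w h1 h2, hpredrd x y z w h1 h2⟩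
    · show τ (x ⊔ z) ≤ τ (y ⊔ w); rw [hT1, hT1]; exact sup_le_sup h1 h2
    · show τ (x * z) ≤ τ (y * w); rw [hT2, hT2]; exact rl_mul_le_mul h1 h2
  · exact ⟨fun x => rfl, fun h => h.symm, fun h1 h2 => h1.trans h2⟩
  · intro x y z w h1 h2
    exact ⟨le_antisymm (hpremeet x y z w h1.le h2.le) (hpremeet y x w z h1.ge h2.ge),
      (by show τ (x ⊔ z) = τ (y ⊔ w); rw [hT1, hT1, h1, h2]),
      (by show τ (x * z) = τ (y * w); rw [hT2, hT2, h1, h2]),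
      le_antisymm (hpredld y x z w h1.ge h2.le) (hpredld x y w z h1.le h2.ge),
      le_antisymm (hpredrd y x z w h1.ge h2.le) (hpredrd x y w z h1.le h2.ge)⟩
  · exact fun x y => Iff.rfl
  · refine ⟨Quot.lift τ (fun a b h => h), fun x => rfl, ?_, ?_, ?_, ?_, ?_, ?_, ?_, ?_⟩
    · intro q1 q2 h
      induction q1 using Quot.ind with | _ a =>
      induction q2 using Quot.ind with | _ b =>
      exact Quot.sound h
    · ext z
      constructor
      · rintro ⟨q, hq⟩
        induction q using Quot.ind with | _ a =>
        exact ⟨a, hq⟩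
      · rintro ⟨a, ha⟩
        exact ⟨Quot.mk _ a, ha⟩
    · exact fun x y => hmeet x y
    · exact fun x y => hT1 x y
    · exact fun x y => hT2 x y
    · exact fun x y => hdldeq x y
    · exact fun x y => hdrdeq x y
    · exact hone
end
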